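/- arXiv:2605.02434 — 3 statements merged into one kernel-verified Lean document; each statement's English description precedes it below -/
import Mathlib

section
/- In the very-special reflection case of Set C with platform points x₄ = (0,1), x₅ = (a₅,0), x₆ = (a₆,0) fixed by the reflection across the x-axis, base points x₂ = (a₂,b₂), x₃ = (a₃,b₃), x₁ = (0, l₁) on the bisector of x₄ and x'₄ = (0,−1), and the first realisation rotated by (f₀:f₁): the determinant s of the rigidity matrix of the averaged configuration factors as a product whose vanishing requires b₂ = 0, b₃ = 0, a₅ = a₆, or 2f₀l₁ + f₁ = 0 (up to nonzero constant factors). -/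
/-- Rotation of the plane about the origin with Blaschke–Grünwald parameters `(u : v)`. -/
noncomputable def rotBG (u v : ℝ) (p : ℝ × ℝ) : ℝ × ℝ :=
  (((u ^ 2 - v ^ 2) * p.1 - 2 * u * v * p.2) / (u ^ 2 + v ^ 2),
   (2 * u * v * p.1 + (u ^ 2 - v ^ 2) * p.2) / (u ^ 2 + v ^ 2))

/-- The gradient `∇c_i` of the leg constraint `c_i` (for base point `b` and platform
point `p` of the configuration), evaluated at the Blaschke–Grünwald parameters
`(q₀:q₁:q₂:q₃) = (1:0:0:0)`. -/
def gradC (b p : ℝ × ℝ) : Fin 4 → ℝ :=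
  ![2 * (p.1 ^ 2 + p.2 ^ 2) - 4 * b.1 * p.1 - 4 * b.2 * p.2,
    4 * b.1 * p.2 - 4 * b.2 * p.1,
    4 * b.2 - 4 * p.2,
    4 * p.1 - 4 * b.1]

theorem det4_aux (v w z : Fin 4 → ℝ) :
    (Matrix.of ![![2, 0, 0, 0], v, w, z]).det =
      2 * (v 1 * (w 2 * z 3 - w 3 * z 2) - v 2 * (w 1 * z 3 - w 3 * z 1)
        + v 3 * (w 1 * z 2 - w 2 * z 1)) := by
  simp [Matrix.det_succ_row_zero, Fin.sum_univ_succ, Fin.succAbove,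
    show (Fin.succ 2 : Fin 4) = 3 from rfl]
  ring

set_option maxHeartbeats 2000000 in
/-- Very-special reflection case of Set C: platform points `x₄ = (0,1)`,
`x₅ = (a₅,0)`, `x₆ = (a₆,0)` (fixed by the reflection across the x-axis, except
`x₄` whose image is `(0,-1)`), base points `x₂ = (a₂,b₂)`, `x₃ = (a₃,b₃)` and `x₁`
on the bisector of `x₄` and `x'₄`, the first realisation rotated by `(f₀:f₁)`.
The determinant `s` of the rigidity matrix of the averaged configuration factors
as a product whose (non-constant) factors are `b₂`, `b₃`, `a₅ - a₆` and
`2f₀l₁ + f₁` (up to the factor `128 f₀³/(f₀²+f₁²)²`); in particular its vanishing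
requires one of these factors to vanish. -/
theorem setC_very_special_rigidity_det_factors
    (f0 f1 a2 b2 a3 b3 a5 a6 l1 : ℝ) (hf : f0 ^ 2 + f1 ^ 2 ≠ 0) :
    let R := rotBG f0 f1
    let x4 : ℝ × ℝ := (0, 1)
    let x5 : ℝ × ℝ := (a5, 0)
    let x6 : ℝ × ℝ := (a6, 0)
    let x4' : ℝ × ℝ := (0, -1)
    let x1 : ℝ × ℝ := (2 * l1, 0)
    let x2 : ℝ × ℝ := (a2, b2)
    let x3 : ℝ × ℝ := (a3, b3)
    let bb1 : ℝ × ℝ := ((1:ℝ)/2) • (R x1 + x1)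
    let bb2 : ℝ × ℝ := ((1:ℝ)/2) • (R x2 + x2)
    let bb3 : ℝ × ℝ := ((1:ℝ)/2) • (R x3 + x3)
    let pp4 : ℝ × ℝ := ((1:ℝ)/2) • (R x4 + x4')
    let pp5 : ℝ × ℝ := ((1:ℝ)/2) • (R x5 + x5)
    let pp6 : ℝ × ℝ := ((1:ℝ)/2) • (R x6 + x6)
    let M : Matrix (Fin 4) (Fin 4) ℝ :=
      Matrix.of ![![2, 0, 0, 0], gradC bb1 pp4, gradC bb2 pp5, gradC bb3 pp6]
    M.det = (128 * f0 ^ 3 / (f0 ^ 2 + f1 ^ 2) ^ 2) * b2 * b3 * (a5 - a6) *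
      (2 * f0 * l1 + f1) := by
  intro R x4 x5 x6 x4' x1 x2 x3 bb1 bb2 bb3 pp4 pp5 pp6 M
  show (Matrix.of ![![2, 0, 0, 0], gradC bb1 pp4, gradC bb2 pp5, gradC bb3 pp6]).det = _
  rw [det4_aux]
  simp only [gradC, Matrix.cons_val_one, Matrix.head_cons, Matrix.cons_val_two,
    Matrix.tail_cons, Matrix.cons_val_three, Matrix.cons_val_zero]
  simp only [bb1, bb2, bb3, pp4, pp5, pp6, R, x1, x2, x3, x4, x5, x6, x4', rotBG,
    Prod.smul_mk, Prod.mk_add_mk, Prod.fst, Prod.snd, smul_eq_mul]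
  field_simp
  ring
end

section
/- Let three segments in ℝ² each join a base point x_i to a platform point x_{i+3}, i = 1,2,3, and suppose the averaged configuration is formed from two realisations of Set A (same base, platforms related by a rotation with Blaschke–Grünwald parameters (e₀:e₁)). If the relative orientation satisfies f₀e₀ + f₁e₁ = 0, then all three averaged platform points coincide (the averaged platform degenerates to a single point). -/
/-- Set A with platforms related by the rotation `(e₀:e₁)` and the first realisation
rotated by `(f₀:f₁)`: if `f₀e₀ + f₁e₁ = 0`, then all three averaged platform points
coincide (the averaged platform degenerates to a single point). -/
theorem setA_platform_degenerates (e0 e1 f0 f1 : ℝ)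
    (he : (e0, e1) ≠ (0, 0)) (hf : (f0, f1) ≠ (0, 0))
    (h : f0 * e0 + f1 * e1 = 0) (p4 p5 p6 : ℝ × ℝ) :
    let xbar : ℝ × ℝ → ℝ × ℝ := fun p => ((1:ℝ)/2) • (rotBG f0 f1 p + rotBG e0 e1 p)
    xbar p4 = xbar p5 ∧ xbar p5 = xbar p6 := by
  intro xbar
  have he' : e0 ^ 2 + e1 ^ 2 ≠ 0 := by
    intro hc
    apply he
    have h0 : e0 = 0 ∧ e1 = 0 := by constructor <;> nlinarith [sq_nonneg e0, sq_nonneg e1]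
    simp [h0.1, h0.2]
  have hf' : f0 ^ 2 + f1 ^ 2 ≠ 0 := by
    intro hc
    apply hf
    have h0 : f0 = 0 ∧ f1 = 0 := by constructor <;> nlinarith [sq_nonneg f0, sq_nonneg f1]
    simp [h0.1, h0.2]
  have key : ∀ p : ℝ × ℝ, xbar p = 0 := by
    intro p
    show ((1:ℝ)/2) • (rotBG f0 f1 p + rotBG e0 e1 p) = 0
    have h1 : rotBG f0 f1 p = - rotBG e0 e1 p := by
      unfold rotBG
      refine Prod.ext ?_ ?_ <;> simp only [Prod.fst, Prod.snd, Prod.neg_mk] <;> field_simp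
      · linear_combination (2*(f0*e0 - f1*e1)*p.1 - 2*(f1*e0 + f0*e1)*p.2) * h
      · linear_combination (2*(f1*e0 + f0*e1)*p.1 + 2*(f0*e0 - f1*e1)*p.2) * h
    rw [h1]
    simp
  exact ⟨(key p4).trans (key p5).symm, (key p5).trans (key p6).symm⟩
end

section
/- If the perpendicular-bisector offsets satisfy l₁ = l₂ = l₃ = e₀/(2e₁) in the Set-A rotation construction, then all three base anchor points of both realisations coincide at a single point; i.e., the base degenerates. -/
lemma base_eq_zero (e0 e1 : ℝ) (he1 : e1 ≠ 0) (p : ℝ × ℝ) :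
    ((1:ℝ)/2) • (p + rotBG e0 e1 p) +
      (e0 / (2 * e1)) •
        ((p.2 - (rotBG e0 e1 p).2, (rotBG e0 e1 p).1 - p.1) : ℝ × ℝ) = (0, 0) := by
  have hD : e0 ^ 2 + e1 ^ 2 ≠ 0 := by positivity
  simp only [rotBG, Prod.smul_mk, smul_eq_mul, Prod.mk_add_mk, Prod.ext_iff,
    Prod.fst_add, Prod.snd_add, Prod.smul_fst, Prod.smul_snd]
  constructor <;> (field_simp; ring)

/-- Set-A rotation construction with offsets `l₁ = l₂ = l₃ = e₀/(2e₁)`: the base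
anchor points `x_i = m_i + l_i • n_i` (with `m_i` the midpoint of a platform point
and its rotated image and `n_i` the perpendicular of their difference) all coincide,
i.e. the base degenerates to a single point. -/
theorem setA_equal_offsets_base_degenerates (e0 e1 : ℝ) (he1 : e1 ≠ 0)
    (p4 p5 p6 : ℝ × ℝ) :
    let base : ℝ × ℝ → ℝ × ℝ := fun p =>
      ((1:ℝ)/2) • (p + rotBG e0 e1 p) +
        (e0 / (2 * e1)) •
          ((p.2 - (rotBG e0 e1 p).2, (rotBG e0 e1 p).1 - p.1) : ℝ × ℝ)
    base p4 = base p5 ∧ base p5 = base p6 := by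
  intro base
  have h : ∀ p, base p = (0, 0) := fun p => base_eq_zero e0 e1 he1 p
  rw [h p4, h p5, h p6]
  exact ⟨rfl, rfl⟩
end
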